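/- arXiv:1212.3939 — 2 statements merged into one kernel-verified Lean document; each statement's English description precedes it below -/
import Mathlib

section
/- Let M be a matroid with ground set partitioned as E = C ∪ X ∪ D (disjoint), and let W' ⊆ X. Then W' is a union of circuits of the minor M' = M / C \ D if and only if there exists a union of circuits W of M with W' ⊆ W ⊆ W' ∪ C. -/
open Set

namespace Matroid

variable {α : Type*}

/-- A circuit of a matroid is a minimal dependent set. -/
def Circuit (M : Matroid α) (C : Set α) : Prop :=
  M.Dep C ∧ ∀ D, M.Dep D → D ⊆ C → D = C

/-- A cocircuit is a circuit of the dual matroid. -/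
def Cocircuit (M : Matroid α) (D : Set α) : Prop := M✶.Circuit D

/-- The matroid obtained by deleting the set `D`. -/
def delete' (M : Matroid α) (D : Set α) : Matroid α := M ↾ (M.E \ D)

/-- The matroid obtained by contracting the set `C`. -/
def contract' (M : Matroid α) (C : Set α) : Matroid α := ((M✶).delete' C)✶

/-- `N` is a minor of `M` if it is obtained from `M` by contracting a set `C`
and deleting a set `D`, where `C` and `D` are disjoint subsets of the ground set. -/
def IsMinor' (N M : Matroid α) : Prop :=
  ∃ C D, Disjoint C D ∧ C ∪ D ⊆ M.E ∧ N = (M.contract' C).delete' D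

/-- A scrawl is a union of circuits. -/
def Scrawl (M : Matroid α) (W : Set α) : Prop :=
  ∃ S : Set (Set α), (∀ C ∈ S, M.Circuit C) ∧ W = ⋃₀ S

/-- A matroid is tame if every circuit-cocircuit intersection is finite. -/
def Tame (M : Matroid α) : Prop :=
  ∀ C D, M.Circuit C → M.Cocircuit D → (C ∩ D).Finite

/-- A `k`-painting of a matroid: nonzero coefficients on each circuit and each
cocircuit such that each circuit-cocircuit pair is "orthogonal". -/
def IsPainting {k : Type*} [Field k] (M : Matroid α)
    (c : Set α → α → k) (d : Set α → α → k) : Prop :=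
  (∀ C, M.Circuit C → ∀ e ∈ C, c C e ≠ 0) ∧
  (∀ D, M.Cocircuit D → ∀ e ∈ D, d D e ≠ 0) ∧
  (∀ C D, M.Circuit C → M.Cocircuit D →
    (C ∩ D).Finite ∧ ∑ᶠ e ∈ C ∩ D, c C e * d D e = 0)

end Matroid

/-!
Every circuit of `M ／ C` extends to a circuit of `M` by elements of `C`; conversely an element
`e ∉ C` of a circuit `K` of `M` is spanned by `K \ {e}`, so it lies in a circuit of `M ／ C`
inside `K \ C`. Deleting `D` just discards the circuits meeting `D`.
-/

namespace Matroid

variable {α : Type*} {M : Matroid α} {C D K W : Set α} {e : α}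

lemma circuit_iff_isCircuit : M.Circuit K ↔ M.IsCircuit K := by
  rw [isCircuit_iff]
  rfl

lemma delete'_eq_delete (M : Matroid α) (D : Set α) : M.delete' D = M ＼ D := rfl

lemma contract'_eq_contract (M : Matroid α) (C : Set α) : M.contract' C = M ／ C := rfl

lemma scrawl_iff_forall_mem_exists_isCircuit :
    M.Scrawl W ↔ ∀ e ∈ W, ∃ K, M.IsCircuit K ∧ e ∈ K ∧ K ⊆ W := by
  simp_rw [← circuit_iff_isCircuit]
  constructor
  · rintro ⟨S, hS, rfl⟩ e ⟨K, hKS, heK⟩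
    exact ⟨K, hS K hKS, heK, subset_sUnion_of_mem hKS⟩
  · intro h
    refine ⟨{K | M.Circuit K ∧ K ⊆ W}, fun K hK ↦ hK.1, ?_⟩
    refine (sUnion_subset fun K hK ↦ hK.2).antisymm' fun e he ↦ ?_
    obtain ⟨K, hK, heK, hKW⟩ := h e he
    exact ⟨K, ⟨hK, hKW⟩, heK⟩

lemma IsCircuit.exists_isCircuit_contract_of_mem (hK : M.IsCircuit K) (he : e ∈ K \ C) :
    ∃ K', (M ／ C).IsCircuit K' ∧ e ∈ K' ∧ K' ⊆ K \ C := by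
  have hecl : e ∈ (M ／ C).closure ((K \ C) \ {e}) := by
    rw [contract_closure_eq]
    refine ⟨M.closure_subset_closure ?_ (hK.mem_closure_sdiff_singleton_of_mem he.1), he.2⟩
    intro x ⟨hxK, hxe⟩
    by_cases hxC : x ∈ C
    · exact Or.inr hxC
    · exact Or.inl ⟨⟨hxK, hxC⟩, hxe⟩
  obtain ⟨K', hK'K, hK', heK'⟩ := exists_isCircuit_of_mem_closure hecl (fun h ↦ h.2 rfl)
  rw [insert_sdiff_singleton, insert_eq_of_mem he] at hK'K
  exact ⟨K', hK', heK', hK'K⟩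

lemma scrawl_delete_iff : (M ＼ D).Scrawl W ↔ M.Scrawl W ∧ Disjoint W D := by
  simp only [scrawl_iff_forall_mem_exists_isCircuit, delete_isCircuit_iff]
  constructor
  · intro h
    refine ⟨fun e he ↦ ?_, disjoint_left.2 fun e he heD ↦ ?_⟩
    · obtain ⟨K, ⟨hK, -⟩, heK, hKW⟩ := h e he
      exact ⟨K, hK, heK, hKW⟩
    · obtain ⟨K, ⟨-, hKD⟩, heK, -⟩ := h e he
      exact disjoint_left.1 hKD heK heD
  · rintro ⟨h, hWD⟩ e he
    obtain ⟨K, hK, heK, hKW⟩ := h e he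
    exact ⟨K, ⟨hK, hWD.mono_left hKW⟩, heK, hKW⟩

lemma scrawl_contract_iff (hWC : Disjoint W C) :
    (M ／ C).Scrawl W ↔ ∃ W₀, M.Scrawl W₀ ∧ W ⊆ W₀ ∧ W₀ ⊆ W ∪ C := by
  simp only [scrawl_iff_forall_mem_exists_isCircuit]
  constructor
  · intro h
    -- the largest scrawl of `M` inside `W ∪ C`
    refine ⟨⋃₀ {K | M.IsCircuit K ∧ K ⊆ W ∪ C}, ?_, fun e he ↦ ?_, sUnion_subset fun K hK ↦ hK.2⟩
    · rintro e ⟨K, hK, heK⟩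
      exact ⟨K, hK.1, heK, subset_sUnion_of_mem hK⟩
    · obtain ⟨K', hK', heK', hK'W⟩ := h e he
      obtain ⟨K, hK, hK'K, hKK'⟩ := hK'.exists_subset_isCircuit_of_contract
      exact ⟨K, ⟨hK, hKK'.trans (union_subset_union_left C hK'W)⟩, hK'K heK'⟩
  · rintro ⟨W₀, hW₀, hWW₀, hW₀W⟩ e he
    obtain ⟨K, hK, heK, hKW₀⟩ := hW₀ e (hWW₀ he)
    obtain ⟨K', hK', heK', hK'K⟩ :=
      hK.exists_isCircuit_contract_of_mem ⟨heK, disjoint_left.1 hWC he⟩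
    exact ⟨K', hK', heK', fun x hx ↦ (hW₀W (hKW₀ (hK'K hx).1)).resolve_right (hK'K hx).2⟩

end Matroid

theorem stmt6_general {α : Type*} (M : Matroid α) (C X D : Set α)
    (hCX : Disjoint C X) (hXD : Disjoint X D)
    (W' : Set α) (hW' : W' ⊆ X) :
    ((M.contract' C).delete' D).Scrawl W' ↔
      ∃ W, M.Scrawl W ∧ W' ⊆ W ∧ W ⊆ W' ∪ C := by
  rw [Matroid.delete'_eq_delete, Matroid.contract'_eq_contract, Matroid.scrawl_delete_iff,
    and_iff_left (hXD.mono_left hW'), Matroid.scrawl_contract_iff (hCX.symm.mono_left hW')]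

/-- A subset of `X` is a union of circuits of the minor `M / C \ D` iff there is a union
of circuits of `M` squeezed between it and its union with `C`. -/
theorem stmt6 {α : Type*} (M : Matroid α) (C X D : Set α)
    (hCX : Disjoint C X) (hCD : Disjoint C D) (hXD : Disjoint X D)
    (hE : M.E = C ∪ X ∪ D) (W' : Set α) (hW' : W' ⊆ X) :
    ((M.contract' C).delete' D).Scrawl W' ↔
      ∃ W, M.Scrawl W ∧ W' ⊆ W ∧ W ⊆ W' ∪ C :=
  stmt6_general M C X D hCX hXD W' hW'
end

section
/- Let M be a finite matroid such that every circuit-cocircuit intersection has even cardinality. Then for any finite family (C_i)_{i ∈ I} of circuits of M, the symmetric difference △_{i∈I} C_i is a disjoint union of circuits of M. -/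
/-! A set meeting every cocircuit in an even number of elements is empty or dependent, because
each element `e` of an independent set `I` is the only element of `I` on some cocircuit. Such a
set `X` therefore contains a circuit `C`, and `X \ C` again meets every cocircuit evenly when all
circuits do, so induction on `|X|` splits `X` into disjoint circuits. The elements lying in an odd
number of the `C i` form such a set: counting the pairs `(i, e)` with `e ∈ C i ∩ D` modulo 2 shows
that it meets each cocircuit `D` evenly. -/

open Set

namespace Matroid

variable {α : Type*}

lemma circuit_iff_isCircuit_s8 {M : Matroid α} {C : Set α} : M.Circuit C ↔ M.IsCircuit C :=
  isCircuit_iff.symm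

lemma cocircuit_iff_isCocircuit {M : Matroid α} {K : Set α} : M.Cocircuit K ↔ M.IsCocircuit K :=
  circuit_iff_isCircuit_s8

lemma Indep.eq_empty_of_forall_even_ncard_inter {M : Matroid α} {I : Set α} (hI : M.Indep I)
    (h : ∀ K, M.IsCocircuit K → Even (I ∩ K).ncard) : I = ∅ := by
  refine eq_empty_of_forall_notMem fun e he ↦ ?_
  obtain ⟨K, hK, hKI⟩ := hI.exists_isCocircuit_inter_eq_mem he
  have hKeven := h K hK
  rw [inter_comm, hKI, ncard_singleton] at hKeven
  exact Nat.not_even_one hKeven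

lemma exists_pairwiseDisjoint_isCircuit_sUnion_eq {M : Matroid α}
    (heven : ∀ C K, M.IsCircuit C → M.IsCocircuit K → Even (C ∩ K).ncard)
    {X : Set α} (hXfin : X.Finite) (hXE : X ⊆ M.E)
    (hX : ∀ K, M.IsCocircuit K → Even (X ∩ K).ncard) :
    ∃ S : Set (Set α), (∀ C ∈ S, M.IsCircuit C) ∧ S.PairwiseDisjoint id ∧ X = ⋃₀ S := by
  induction hn : X.ncard using Nat.strong_induction_on generalizing X with
  | _ n ih =>
    obtain rfl | hne := X.eq_empty_or_nonempty
    · exact ⟨∅, by simp, pairwiseDisjoint_empty, sUnion_empty.symm⟩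
    have hXdep : M.Dep X := by
      rw [← not_indep_iff hXE]
      exact fun hXi ↦ hne.ne_empty (hXi.eq_empty_of_forall_even_ncard_inter hX)
    obtain ⟨C, hCX, hC⟩ := hXdep.exists_isCircuit_subset
    have hrest (K : Set α) (hK : M.IsCocircuit K) : Even ((X \ C) ∩ K).ncard := by
      have hsplit := ncard_sdiff_add_ncard_of_subset (inter_subset_inter_left K hCX)
        (hXfin.inter_of_left K)
      rw [← inter_sdiff_distrib_right] at hsplit
      have hXK := hX K hK
      rw [← hsplit, Nat.even_add] at hXK
      exact hXK.2 (heven C K hC hK)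
    have hssub : X \ C ⊂ X :=
      sdiff_ssubset_left_iff.2 (by rw [inter_eq_right.2 hCX]; exact hC.nonempty)
    obtain ⟨S, hSC, hSdisj, hSX⟩ :=
      ih _ (hn ▸ ncard_lt_ncard hssub hXfin) hXfin.sdiff (sdiff_subset.trans hXE) hrest rfl
    refine ⟨insert C S, forall_mem_insert.2 ⟨hC, hSC⟩, hSdisj.insert fun D hD _ ↦ ?_, ?_⟩
    · exact disjoint_sdiff_right.mono_right (hSX ▸ subset_sUnion_of_mem hD)
    · rw [sUnion_insert, ← hSX, union_sdiff_cancel hCX]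

end Matroid

open Finset in
lemma even_ncard_setOf_odd_ncard_inter {α ι : Type*} [Fintype ι] (C : ι → Set α) {D : Set α}
    (hD : D.Finite) (h : ∀ i, Even (C i ∩ D).ncard) :
    Even ({e | Odd {i | e ∈ C i}.ncard} ∩ D).ncard := by
  classical
  let r : ι → α → Prop := fun i e ↦ e ∈ C i
  have hdouble := sum_card_bipartiteAbove_eq_sum_card_bipartiteBelow (s := univ)
    (t := hD.toFinset) r
  have hleft (i : ι) : #(hD.toFinset.bipartiteAbove r i) = (C i ∩ D).ncard := by
    rw [← ncard_coe_finset]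
    congr 1; ext; simp [r, bipartiteAbove, and_comm]
  have hright (e : α) : #(univ.bipartiteBelow r e) = {i | e ∈ C i}.ncard := by
    rw [← ncard_coe_finset]
    congr 1; ext; simp [r, bipartiteBelow]
  simp only [hleft, hright] at hdouble
  have hodd := (even_sum_iff_even_card_odd _).1 (hdouble ▸ even_sum _ fun i _ ↦ h i)
  rw [← ncard_coe_finset, coe_filter] at hodd
  convert hodd using 2
  ext
  simp [and_comm]

/-- In a finite matroid all of whose circuit-cocircuit intersections are even, any
symmetric difference of finitely many circuits is a disjoint union of circuits. -/
theorem stmt8 {α : Type*} (M : Matroid α) [M.Finite]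
    (heven : ∀ C D, M.Circuit C → M.Cocircuit D → Even (C ∩ D).ncard)
    {ι : Type*} [Fintype ι] (C : ι → Set α) (hC : ∀ i, M.Circuit (C i)) :
    ∃ S : Set (Set α), (∀ o ∈ S, M.Circuit o) ∧ S.PairwiseDisjoint id ∧
      {e | Odd {i | e ∈ C i}.ncard} = ⋃₀ S := by
  have hXE : {e | Odd {i | e ∈ C i}.ncard} ⊆ M.E := fun e he ↦ by
    obtain ⟨i, hi⟩ := nonempty_of_ncard_ne_zero (Odd.pos he).ne'
    exact (hC i).1.subset_ground hi
  have hevenIs : ∀ C K, M.IsCircuit C → M.IsCocircuit K → Even (C ∩ K).ncard :=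
    fun C K hC hK ↦
      heven C K (Matroid.circuit_iff_isCircuit_s8.2 hC) (Matroid.cocircuit_iff_isCocircuit.2 hK)
  have hXcocircuit (K : Set α) (hK : M.IsCocircuit K) :
      Even ({e | Odd {i | e ∈ C i}.ncard} ∩ K).ncard :=
    even_ncard_setOf_odd_ncard_inter C (M.set_finite K hK.subset_ground)
      fun i ↦ hevenIs _ K (Matroid.circuit_iff_isCircuit_s8.1 (hC i)) hK
  obtain ⟨S, hSC, hSdisj, hSX⟩ :=
    Matroid.exists_pairwiseDisjoint_isCircuit_sUnion_eq hevenIs (M.set_finite _ hXE) hXE hXcocircuit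
  exact ⟨S, fun o ho ↦ Matroid.circuit_iff_isCircuit_s8.2 (hSC o ho), hSdisj, hSX⟩
end
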